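/- Let θ ∈ C₂^Z, let S_θ be a set of representatives of the left cosets of G_θ in G with 1_G ∈ S_θ, and let V ⊆ L(X) be a G_θ-invariant irreducible subspace affording the irreducible representation η of G_θ. Then the subspace W = ⊕_{s∈S_θ} {χ_{sθ} ⊗ f : f ∈ sV} of L(C₂^Z × X) is invariant under the action of C₂≀G, and the representation of C₂≀G on W is equivalent to the induced representation Ind_{C₂≀G_θ}^{C₂≀G}(χ̃_θ ⊗ η^#); in particular W is an irreducible C₂≀G-subspace. -/

import Mathlib

open Finset

noncomputable section

/-- The action of `G` on lamp configurations `C₂^Z`: `(gθ)(z) = θ(g⁻¹z)`. -/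
def confAct {G : Type*} [Group G] {Z : Type*} [MulAction G Z]
    (g : G) (θ : Z → ZMod 2) : Z → ZMod 2 :=
  fun z => θ (g⁻¹ • z)

/-- The character `χ_θ(ω) = (−1)^{Σ_z θ(z)·ω(z)}` of `C₂^Z`. -/
def confChi {Z : Type*} [Fintype Z] (θ ω : Z → ZMod 2) : ℂ :=
  (-1 : ℂ) ^ (∑ z : Z, (θ z * ω z).val)

/-- The action of `g ∈ G` on `L(X)`: `(gf)(x) = f(g⁻¹x)`, as a linear operator. -/
def transL {G : Type*} [Group G] {X : Type*} [MulAction G X] (g : G) :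
    (X → ℂ) →ₗ[ℂ] (X → ℂ) where
  toFun f := fun x => f (g⁻¹ • x)
  map_add' _ _ := rfl
  map_smul' _ _ := rfl

/-- The action of the element `(ω,g)` of the wreath product `C₂ ≀ G` on
`L(C₂^Z × X)`: `((ω,g)F)(σ,x) = F((ω,g)⁻¹(σ,x)) = F(g⁻¹ω + g⁻¹σ, g⁻¹x)`. -/
def wreathAct {G : Type*} [Group G] {Z : Type*} [MulAction G Z] {X : Type*}
    [MulAction G X] (ω : Z → ZMod 2) (g : G) (F : (Z → ZMod 2) × X → ℂ) :
    (Z → ZMod 2) × X → ℂ :=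
  fun p => F (confAct g⁻¹ ω + confAct g⁻¹ p.1, g⁻¹ • p.2)

/-- The linear map `f ↦ χ_θ ⊗ f` from `L(X)` to `L(C₂^Z × X)`. -/
def tChi {Z : Type*} [Fintype Z] {X : Type*} (θ : Z → ZMod 2) :
    (X → ℂ) →ₗ[ℂ] ((Z → ZMod 2) × X → ℂ) where
  toFun f := fun p => confChi θ p.1 * f p.2
  map_add' f₁ f₂ := by funext p; simp [mul_add]
  map_smul' c f := by funext p; simp; ring

/-- The subspace `⊕_{s∈S_θ} {χ_{sθ} ⊗ f : f ∈ sV}` of `L(C₂^Z × X)`. -/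
def inducedImage {G : Type*} [Group G] {Z : Type*} [Fintype Z] [MulAction G Z]
    {X : Type*} [MulAction G X] (S : Set G) (θ : Z → ZMod 2)
    (V : Submodule ℂ (X → ℂ)) : Submodule ℂ ((Z → ZMod 2) × X → ℂ) :=
  ⨆ s ∈ S, (V.map (transL s)).map (tChi (confAct s θ))

/-- Multiplication in the wreath product `C₂ ≀ G`:
`(θ,g)·(ω,h) = (θ + gω, gh)`. -/
def wmul {G : Type*} [Group G] {Z : Type*} [MulAction G Z]
    (a b : (Z → ZMod 2) × G) : (Z → ZMod 2) × G :=
  (a.1 + confAct a.2 b.1, a.2 * b.2)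

/-- Inversion in the wreath product `C₂ ≀ G`: `(θ,g)⁻¹ = (g⁻¹θ, g⁻¹)`. -/
def winv {G : Type*} [Group G] {Z : Type*} [MulAction G Z]
    (a : (Z → ZMod 2) × G) : (Z → ZMod 2) × G :=
  (confAct a.2⁻¹ a.1, a.2⁻¹)

/-- The action of `(ω,g) ∈ C₂≀G` on the carrier space of the representation induced
from `C₂≀G_θ`: `((ω,g)Φ)(a) = Φ((ω,g)⁻¹·a)`. -/
def indAct {G : Type*} [Group G] {Z : Type*} [MulAction G Z] {X : Type*}
    (ω : Z → ZMod 2) (g : G) (Φ : (Z → ZMod 2) × G → (X → ℂ)) :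
    (Z → ZMod 2) × G → (X → ℂ) :=
  fun a => Φ (wmul (winv (ω, g)) a)

/-- The carrier space of the representation of `C₂≀G` induced from the irreducible
representation `χ̃_θ ⊗ η^#` of `C₂≀G_θ`, where `η` is the representation of `G_θ` on
`V`: functions `Φ : C₂≀G → V` with `Φ(a·(σ,h)) = (χ̃_θ ⊗ η^#)(σ,h)⁻¹ Φ(a)
= χ_θ(σ)·(h⁻¹ acting on Φ(a))` for all `(σ,h) ∈ C₂≀G_θ`. -/
def indSpace (G : Type*) [Group G] {Z : Type*} [Fintype Z] [MulAction G Z]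
    {X : Type*} [MulAction G X] (θ : Z → ZMod 2) (V : Submodule ℂ (X → ℂ)) :
    Submodule ℂ ((Z → ZMod 2) × G → (X → ℂ)) where
  carrier := {Φ | (∀ a, Φ a ∈ V) ∧
    ∀ (a : (Z → ZMod 2) × G) (σ : Z → ZMod 2) (h : G), confAct h θ = θ →
      Φ (wmul a (σ, h)) = confChi θ σ • transL h⁻¹ (Φ a)}
  add_mem' := by
    rintro Φ Ψ ⟨hΦ1, hΦ2⟩ ⟨hΨ1, hΨ2⟩
    refine ⟨fun a => Submodule.add_mem V (hΦ1 a) (hΨ1 a), fun a σ h hh => ?_⟩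
    simp only [Pi.add_apply, hΦ2 a σ h hh, hΨ2 a σ h hh, map_add, smul_add]
  zero_mem' := by
    refine ⟨fun a => Submodule.zero_mem V, fun a σ h hh => ?_⟩
    simp
  smul_mem' := by
    rintro c Φ ⟨h1, h2⟩
    refine ⟨fun a => Submodule.smul_mem V c (h1 a), fun a σ h hh => ?_⟩
    simp only [Pi.smul_apply, h2 a σ h hh, map_smul]
    rw [smul_comm]
section Aux

variable {G : Type*} [Group G] {Z : Type*} [Fintype Z] [MulAction G Z]
variable {X : Type*} [MulAction G X]

@[simp] lemma confAct_one (θ : Z → ZMod 2) : confAct (1 : G) θ = θ := by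
  funext z; simp [confAct]

lemma confAct_mul (a b : G) (θ : Z → ZMod 2) :
    confAct (a * b) θ = confAct a (confAct b θ) := by
  funext z; simp [confAct, mul_smul]

@[simp] lemma confAct_zero (g : G) : confAct g (0 : Z → ZMod 2) = 0 := rfl

lemma confAct_add (g : G) (θ ω : Z → ZMod 2) :
    confAct g (θ + ω) = confAct g θ + confAct g ω := rfl

@[simp] lemma confAct_inv_confAct (g : G) (θ : Z → ZMod 2) :
    confAct g⁻¹ (confAct g θ) = θ := by
  rw [← confAct_mul]; simp

@[simp] lemma confAct_confAct_inv (g : G) (θ : Z → ZMod 2) :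
    confAct g (confAct g⁻¹ θ) = θ := by
  rw [← confAct_mul]; simp

lemma neg_one_pow_congr_zmod {m n : ℕ} (h : (m : ZMod 2) = (n : ZMod 2)) :
    (-1 : ℂ) ^ m = (-1 : ℂ) ^ n := by
  have h2 : m % 2 = n % 2 := (ZMod.natCast_eq_natCast_iff _ _ _).1 h
  conv_lhs => rw [← Nat.div_add_mod m 2]
  conv_rhs => rw [← Nat.div_add_mod n 2]
  rw [pow_add, pow_add, pow_mul, pow_mul, h2]
  norm_num

lemma confChi_eq_pow_val (θ ω : Z → ZMod 2) :
    confChi θ ω = (-1 : ℂ) ^ (∑ z : Z, θ z * ω z).val := by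
  apply neg_one_pow_congr_zmod
  push_cast
  simp [ZMod.natCast_val, ZMod.cast_id]

@[simp] lemma confChi_zero_right (θ : Z → ZMod 2) : confChi θ 0 = 1 := by
  simp [confChi]

lemma confChi_comm (θ ω : Z → ZMod 2) : confChi θ ω = confChi ω θ := by
  simp [confChi, mul_comm]

lemma confChi_add_right (θ ω σ : Z → ZMod 2) :
    confChi θ (ω + σ) = confChi θ ω * confChi θ σ := by
  rw [confChi_eq_pow_val, confChi_eq_pow_val, confChi_eq_pow_val, ← pow_add]
  apply neg_one_pow_congr_zmod
  push_cast
  simp [ZMod.natCast_val, ZMod.cast_id, mul_add, Finset.sum_add_distrib]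

lemma confChi_add_left (θ ω σ : Z → ZMod 2) :
    confChi (θ + ω) σ = confChi θ σ * confChi ω σ := by
  rw [confChi_comm, confChi_add_right, confChi_comm θ σ, confChi_comm ω σ]

lemma confChi_confAct (g : G) (θ ω : Z → ZMod 2) :
    confChi (confAct g θ) (confAct g ω) = confChi θ ω := by
  unfold confChi confAct
  congr 1
  exact Fintype.sum_bijective (fun z => g⁻¹ • z) (MulAction.bijective g⁻¹) _ _ (fun z => rfl)

lemma confChi_confAct_left (g : G) (θ ω : Z → ZMod 2) :
    confChi (confAct g θ) ω = confChi θ (confAct g⁻¹ ω) := by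
  rw [← confChi_confAct g θ (confAct g⁻¹ ω), confAct_confAct_inv]

end Aux
section Aux2
set_option linter.unusedSectionVars false

variable {G : Type*} [Group G] {Z : Type*} [Fintype Z] [DecidableEq Z] [MulAction G Z]
variable {X : Type*} [MulAction G X]

lemma zmod2_add_eq_zero_iff (a b : ZMod 2) : a + b = 0 ↔ a = b := by revert a b; decide

lemma sum_confChi (μ : Z → ZMod 2) :
    ∑ σ : Z → ZMod 2, confChi μ σ =
      if μ = 0 then (Fintype.card (Z → ZMod 2) : ℂ) else 0 := by
  split_ifs with h
  · subst h
    rw [Finset.sum_congr rfl fun σ _ => by rw [confChi_comm, confChi_zero_right]]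
    simp [Finset.card_univ]
  · obtain ⟨z₀, hz₀⟩ : ∃ z, μ z ≠ 0 := by
      by_contra hc; push_neg at hc; exact h (funext hc)
    have hμ1 : μ z₀ = 1 := by
      rcases (by decide : ∀ a : ZMod 2, a = 0 ∨ a = 1) (μ z₀) with h' | h'
      · exact absurd h' hz₀
      · exact h'
    set d : Z → ZMod 2 := Pi.single z₀ 1 with hd
    have hμd : confChi μ d = -1 := by
      unfold confChi
      have hsum : ∑ z, (μ z * d z).val = 1 := by
        rw [Finset.sum_eq_single z₀]
        · simp [hd, hμ1]; decide
        · intro b _ hb; simp [hd, Pi.single_eq_of_ne hb]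
        · simp
      rw [hsum, pow_one]
    have key : ∑ σ : Z → ZMod 2, confChi μ (σ + d) = ∑ σ : Z → ZMod 2, confChi μ σ :=
      Fintype.sum_equiv (Equiv.addRight d) _ _ (fun σ => by simp)
    have key2 : ∑ σ : Z → ZMod 2, confChi μ (σ + d)
        = (∑ σ : Z → ZMod 2, confChi μ σ) * (-1) := by
      rw [Finset.sum_mul]
      exact Finset.sum_congr rfl fun σ _ => by rw [confChi_add_right, hμd]
    have hS : (∑ σ : Z → ZMod 2, confChi μ σ) + ∑ σ : Z → ZMod 2, confChi μ σ = 0 := by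
      have := key.symm.trans key2
      linear_combination this
    exact add_self_eq_zero.mp hS

lemma confChi_orthogonal (τ τ' : Z → ZMod 2) :
    ∑ σ : Z → ZMod 2, confChi τ σ * confChi τ' σ =
      if τ = τ' then (Fintype.card (Z → ZMod 2) : ℂ) else 0 := by
  have h1 : ∀ σ, confChi τ σ * confChi τ' σ = confChi (τ + τ') σ :=
    fun σ => (confChi_add_left τ τ' σ).symm
  rw [Finset.sum_congr rfl fun σ _ => h1 σ, sum_confChi]
  have hiff : τ + τ' = 0 ↔ τ = τ' := by
    constructor
    · intro h; funext z
      exact (zmod2_add_eq_zero_iff _ _).1 (congrFun h z)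
    · intro h; funext z
      exact (zmod2_add_eq_zero_iff _ _).2 (congrFun h z)
  exact if_congr hiff rfl rfl

@[simp] lemma transL_apply (g : G) (f : X → ℂ) (x : X) : transL g f x = f (g⁻¹ • x) := rfl

@[simp] lemma transL_one (f : X → ℂ) : transL (1 : G) f = f := by
  funext x; simp

lemma transL_transL (a b : G) (f : X → ℂ) : transL a (transL b f) = transL (a * b) f := by
  funext x; simp [mul_smul]

@[simp] lemma tChi_apply (μ : Z → ZMod 2) (f : X → ℂ) (p : (Z → ZMod 2) × X) :
    tChi μ f p = confChi μ p.1 * f p.2 := rfl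

/-- `wreathAct` as a linear map. -/
def wreathActL (ω : Z → ZMod 2) (g : G) :
    ((Z → ZMod 2) × X → ℂ) →ₗ[ℂ] ((Z → ZMod 2) × X → ℂ) where
  toFun := wreathAct ω g
  map_add' _ _ := rfl
  map_smul' _ _ := rfl

@[simp] lemma wreathActL_apply (ω : Z → ZMod 2) (g : G) (F : (Z → ZMod 2) × X → ℂ) :
    wreathActL ω g F = wreathAct ω g F := rfl

lemma wreathAct_tChi (ω : Z → ZMod 2) (g : G) (μ : Z → ZMod 2) (f : X → ℂ) :
    wreathAct ω g (tChi μ f) = confChi (confAct g μ) ω • tChi (confAct g μ) (transL g f) := by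
  funext p
  simp only [wreathAct, tChi_apply, Pi.smul_apply, smul_eq_mul, transL_apply]
  rw [confChi_add_right, ← confChi_confAct_left, ← confChi_confAct_left]
  ring

lemma wreathAct_zero_one (F : (Z → ZMod 2) × X → ℂ) :
    wreathAct (0 : Z → ZMod 2) (1 : G) F = F := by
  funext p
  simp [wreathAct]

end Aux2
section Aux3
set_option linter.unusedSectionVars false

variable {G : Type*} [Group G] [Fintype G]
variable {Z : Type*} [Fintype Z] [DecidableEq Z] [MulAction G Z]
variable {X : Type*} [MulAction G X]

/-- The intertwining map `T`. -/
noncomputable def TmapAux (θ : Z → ZMod 2) :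
    ((Z → ZMod 2) × G → (X → ℂ)) →ₗ[ℂ] ((Z → ZMod 2) × X → ℂ) :=
  ((Finset.univ.filter fun h : G => confAct h θ = θ).card : ℂ)⁻¹ •
    ∑ g : G, (tChi (confAct g θ)).comp
      ((transL g).comp (LinearMap.proj ((0 : Z → ZMod 2), g)))

lemma TmapAux_apply (θ : Z → ZMod 2) (Φ : (Z → ZMod 2) × G → (X → ℂ)) :
    TmapAux θ Φ = ((Finset.univ.filter fun h : G => confAct h θ = θ).card : ℂ)⁻¹ •
      ∑ g : G, tChi (confAct g θ) (transL g (Φ (0, g))) := by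
  simp [TmapAux, LinearMap.sum_apply]

lemma stab_card_ne_zero (θ : Z → ZMod 2) :
    ((Finset.univ.filter fun h : G => confAct h θ = θ).card : ℂ) ≠ 0 := by
  rw [Nat.cast_ne_zero]
  apply Finset.card_ne_zero_of_mem (a := (1 : G))
  simp

lemma card_coset (θ : Z → ZMod 2) (s : G) :
    (Finset.univ.filter fun g : G => confAct (s⁻¹ * g) θ = θ).card
      = (Finset.univ.filter fun h : G => confAct h θ = θ).card := by
  apply Finset.card_bij' (fun g _ => s⁻¹ * g) (fun h _ => s * h)
  · intro g hg
    simp only [Finset.mem_filter, Finset.mem_univ, true_and] at hg ⊢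
    exact hg
  · intro h hh
    simp only [Finset.mem_filter, Finset.mem_univ, true_and] at hh ⊢
    rwa [inv_mul_cancel_left]
  · intro g _; rw [mul_inv_cancel_left]
  · intro h _; rw [inv_mul_cancel_left]

lemma confAct_eq_of_rep {θ : Z → ZMod 2} {s g : G} (h : confAct (s⁻¹ * g) θ = θ) :
    confAct g θ = confAct s θ := by
  calc confAct g θ = confAct (s * (s⁻¹ * g)) θ := by rw [mul_inv_cancel_left]
  _ = confAct s (confAct (s⁻¹ * g) θ) := confAct_mul _ _ _
  _ = confAct s θ := by rw [h]

lemma reps_inj {Sθ : Set G} {θ : Z → ZMod 2}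
    (hreps : ∀ g : G, ∃! s, s ∈ Sθ ∧ confAct (s⁻¹ * g) θ = θ)
    {s s' : G} (hs : s ∈ Sθ) (hs' : s' ∈ Sθ)
    (h : confAct s θ = confAct s' θ) : s = s' := by
  obtain ⟨t, _, hun⟩ := hreps s
  have e1 : s = t := hun s ⟨hs, by simp⟩
  have e2 : s' = t := hun s' ⟨hs', by rw [confAct_mul, h, confAct_inv_confAct]⟩
  rw [e1, e2]

lemma gen_mem {Sθ : Set G} {θ : Z → ZMod 2} {V : Submodule ℂ (X → ℂ)}
    {s : G} (hs : s ∈ Sθ) {f : X → ℂ} (hf : f ∈ V) :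
    tChi (confAct s θ) (transL s f) ∈ inducedImage Sθ θ V := by
  have hle : (V.map (transL s)).map (tChi (confAct s θ)) ≤ inducedImage Sθ θ V :=
    le_iSup₂ (f := fun (s : G) (_ : s ∈ Sθ) =>
      (V.map (transL s)).map (tChi (confAct s θ))) s hs
  exact hle ⟨transL s f, ⟨f, hf, rfl⟩, rfl⟩

open Classical in
/-- The canonical preimage of a generator `χ_{sθ} ⊗ (sf)` under `T`. -/
noncomputable def PhiOf (θ : Z → ZMod 2) (s : G) (f : X → ℂ) :
    (Z → ZMod 2) × G → (X → ℂ) :=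
  fun a => if confAct (s⁻¹ * a.2) θ = θ then
    confChi θ (confAct s⁻¹ a.1) • transL (a.2⁻¹ * s) f else 0

end Aux3
section Aux4
set_option linter.unusedSectionVars false

variable {G : Type*} [Group G] [Fintype G]
variable {Z : Type*} [Fintype Z] [DecidableEq Z] [MulAction G Z]
variable {X : Type*} [MulAction G X]

lemma confAct_inv_eq {θ : Z → ZMod 2} {k : G} (h : confAct k θ = θ) :
    confAct k⁻¹ θ = θ := by
  conv_lhs => rw [← h]
  exact confAct_inv_confAct k θ

lemma PhiOf_mem_indSpace {θ : Z → ZMod 2} {V : Submodule ℂ (X → ℂ)}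
    (hV : ∀ h : G, confAct h θ = θ → ∀ f ∈ V, transL h f ∈ V)
    (s : G) {f : X → ℂ} (hf : f ∈ V) :
    PhiOf θ s f ∈ indSpace G θ V := by
  classical
  constructor
  · intro a
    unfold PhiOf
    split_ifs with h
    · apply Submodule.smul_mem
      have h' : confAct (a.2⁻¹ * s) θ = θ := by
        have := confAct_inv_eq h
        rwa [mul_inv_rev, inv_inv] at this
      exact hV _ h' f hf
    · exact Submodule.zero_mem V
  · intro a σ h hh
    unfold PhiOf
    have hcond : confAct (s⁻¹ * (wmul a (σ, h)).2) θ = θ ↔ confAct (s⁻¹ * a.2) θ = θ := by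
      show confAct (s⁻¹ * (a.2 * h)) θ = θ ↔ _
      rw [← mul_assoc, confAct_mul (s⁻¹ * a.2) h, hh]
    rw [if_congr hcond rfl rfl]
    split_ifs with hc
    · show confChi θ (confAct s⁻¹ (a.1 + confAct a.2 σ)) • transL ((a.2 * h)⁻¹ * s) f
        = confChi θ σ • transL h⁻¹ (confChi θ (confAct s⁻¹ a.1) • transL (a.2⁻¹ * s) f)
      rw [map_smul, transL_transL, confAct_add, ← confAct_mul, confChi_add_right]
      have hchi : confChi θ (confAct (s⁻¹ * a.2) σ) = confChi θ σ := by
        have h2 := confChi_confAct_left ((s⁻¹ * a.2)⁻¹) θ σ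
        rw [inv_inv, confAct_inv_eq hc] at h2
        exact h2.symm
      have hg : (a.2 * h)⁻¹ * s = h⁻¹ * (a.2⁻¹ * s) := by group
      rw [hchi, hg, mul_comm, mul_smul]
    · show (0 : X → ℂ) = confChi θ σ • transL h⁻¹ (0 : X → ℂ)
      rw [map_zero, smul_zero]

lemma TmapAux_PhiOf (θ : Z → ZMod 2) (s : G) (f : X → ℂ) :
    TmapAux θ (PhiOf θ s f) = tChi (confAct s θ) (transL s f) := by
  classical
  rw [TmapAux_apply]
  have hterm : ∀ g : G, tChi (confAct g θ) (transL g (PhiOf θ s f (0, g)))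
      = if confAct (s⁻¹ * g) θ = θ then tChi (confAct s θ) (transL s f) else 0 := by
    intro g
    unfold PhiOf
    split_ifs with h
    · simp only [confAct_zero, confChi_zero_right, one_smul]
      rw [transL_transL, mul_inv_cancel_left, confAct_eq_of_rep h]
    · simp
  rw [Finset.sum_congr rfl fun g _ => hterm g, ← Finset.sum_filter, Finset.sum_const,
    card_coset]
  rw [← Nat.cast_smul_eq_nsmul ℂ, smul_smul, inv_mul_cancel₀ (stab_card_ne_zero θ), one_smul]

end Aux4
section Aux5
set_option linter.unusedSectionVars false

variable {G : Type*} [Group G] [Fintype G]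
variable {Z : Type*} [Fintype Z] [DecidableEq Z] [MulAction G Z]
variable {X : Type*} [MulAction G X]

/-- Projection onto the `χ_τ`-isotypic component. -/
noncomputable def EmapAux (G : Type*) [Group G] [MulAction G Z] [MulAction G X]
    (τ : Z → ZMod 2) :
    ((Z → ZMod 2) × X → ℂ) →ₗ[ℂ] ((Z → ZMod 2) × X → ℂ) :=
  ((Fintype.card (Z → ZMod 2) : ℂ))⁻¹ •
    ∑ ρ : Z → ZMod 2, confChi τ ρ • wreathActL (X := X) ρ (1 : G)

lemma piCard_ne_zero : ((Fintype.card (Z → ZMod 2) : ℂ)) ≠ 0 := by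
  rw [Nat.cast_ne_zero]
  exact Fintype.card_ne_zero

lemma EmapAux_apply (τ : Z → ZMod 2) (F : (Z → ZMod 2) × X → ℂ) :
    EmapAux (X := X) G τ F = ((Fintype.card (Z → ZMod 2) : ℂ))⁻¹ •
      ∑ ρ : Z → ZMod 2, confChi τ ρ • wreathAct ρ (1 : G) F := by
  simp [EmapAux, LinearMap.sum_apply]

lemma EmapAux_tChi (τ μ : Z → ZMod 2) (f : X → ℂ) :
    EmapAux (X := X) G τ (tChi μ f) = if μ = τ then tChi μ f else 0 := by
  rw [EmapAux_apply]
  have hterm : ∀ ρ : Z → ZMod 2, confChi τ ρ • wreathAct ρ (1 : G) (tChi μ f)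
      = (confChi τ ρ * confChi μ ρ) • tChi μ f := by
    intro ρ
    rw [wreathAct_tChi, confAct_one, transL_one, smul_smul]
  rw [Finset.sum_congr rfl fun ρ _ => hterm ρ, ← Finset.sum_smul, confChi_orthogonal,
    smul_smul]
  by_cases h : τ = μ
  · rw [if_pos h, if_pos h.symm, inv_mul_cancel₀ (piCard_ne_zero (Z := Z)), one_smul]
  · rw [if_neg h, if_neg (fun hh => h hh.symm), mul_zero, zero_smul]

lemma sum_EmapAux (F : (Z → ZMod 2) × X → ℂ) :
    ∑ τ : Z → ZMod 2, EmapAux (X := X) G τ F = F := by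
  have hterm : ∀ τ : Z → ZMod 2, EmapAux (X := X) G τ F
      = ((Fintype.card (Z → ZMod 2) : ℂ))⁻¹ •
        ∑ ρ : Z → ZMod 2, confChi τ ρ • wreathAct ρ (1 : G) F := fun τ => EmapAux_apply τ F
  rw [Finset.sum_congr rfl fun τ _ => hterm τ, ← Finset.smul_sum, Finset.sum_comm]
  have inner : ∀ ρ : Z → ZMod 2,
      (∑ τ : Z → ZMod 2, confChi τ ρ • wreathAct ρ (1 : G) F)
        = (if ρ = 0 then (Fintype.card (Z → ZMod 2) : ℂ) else 0) • wreathAct ρ (1 : G) F := by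
    intro ρ
    rw [← Finset.sum_smul]
    congr 1
    rw [Finset.sum_congr rfl fun τ _ => confChi_comm τ ρ, sum_confChi]
  rw [Finset.sum_congr rfl fun ρ _ => inner ρ]
  have : ∀ ρ : Z → ZMod 2, ρ ∈ Finset.univ →
      ((if ρ = 0 then (Fintype.card (Z → ZMod 2) : ℂ) else 0) • wreathAct ρ (1 : G) F)
      = if ρ = 0 then (Fintype.card (Z → ZMod 2) : ℂ) • wreathAct ρ (1 : G) F else 0 := by
    intro ρ _; split_ifs <;> simp
  rw [Finset.sum_congr rfl this, Finset.sum_ite_eq' Finset.univ (0 : Z → ZMod 2)]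
  simp [wreathAct_zero_one, smul_smul, inv_mul_cancel₀ (piCard_ne_zero (Z := Z))]

end Aux5
section Aux6
set_option linter.unusedSectionVars false

variable {G : Type*} [Group G] [Fintype G]
variable {Z : Type*} [Fintype Z] [DecidableEq Z] [MulAction G Z]
variable {X : Type*} [MulAction G X]
variable {θ : Z → ZMod 2} {Sθ : Set G} {V : Submodule ℂ (X → ℂ)}

lemma map_inducedImage_le {T : ((Z → ZMod 2) × X → ℂ) →ₗ[ℂ] ((Z → ZMod 2) × X → ℂ)}
    {P : Submodule ℂ ((Z → ZMod 2) × X → ℂ)}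
    (hP : ∀ s ∈ Sθ, ∀ f ∈ V, T (tChi (confAct s θ) (transL s f)) ∈ P) :
    Submodule.map T (inducedImage Sθ θ V) ≤ P := by
  rw [inducedImage, Submodule.map_iSup]
  apply iSup_le; intro s
  rw [Submodule.map_iSup]
  apply iSup_le; intro hs
  rintro y ⟨x, ⟨u, ⟨f, hf, rfl⟩, rfl⟩, rfl⟩
  exact hP s hs f hf

lemma W_invariant
    (hreps : ∀ g : G, ∃! s, s ∈ Sθ ∧ confAct (s⁻¹ * g) θ = θ)
    (hV : ∀ h : G, confAct h θ = θ → ∀ f ∈ V, transL h f ∈ V) :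
    ∀ (ω : Z → ZMod 2) (g : G), ∀ F ∈ inducedImage Sθ θ V,
      wreathAct ω g F ∈ inducedImage Sθ θ V := by
  intro ω g F hF
  have key : Submodule.map (wreathActL ω g) (inducedImage Sθ θ V) ≤ inducedImage Sθ θ V := by
    apply map_inducedImage_le
    intro s hs f hf
    rw [wreathActL_apply, wreathAct_tChi, transL_transL, ← confAct_mul]
    obtain ⟨t, ⟨ht, htθ⟩, _⟩ := hreps (g * s)
    rw [confAct_eq_of_rep htθ]
    apply Submodule.smul_mem
    have heq : transL (g * s) f = transL t (transL (t⁻¹ * (g * s)) f) := by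
      rw [transL_transL, mul_inv_cancel_left]
    rw [heq]
    exact gen_mem ht (hV _ htθ f hf)
  exact key ⟨F, hF, rfl⟩

end Aux6
section Aux7
set_option linter.unusedSectionVars false

variable {G : Type*} [Group G] [Fintype G]
variable {Z : Type*} [Fintype Z] [DecidableEq Z] [MulAction G Z]
variable {X : Type*} [MulAction G X]
variable {θ : Z → ZMod 2} {Sθ : Set G} {V : Submodule ℂ (X → ℂ)}

/-- For `Φ` in the induced space, `Φ(0, s·h) = h⁻¹ · Φ(0,s)` for `h ∈ G_θ`. -/
lemma indSpace_zero_eq {Φ : (Z → ZMod 2) × G → (X → ℂ)} (hΦ : Φ ∈ indSpace G θ V)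
    {s h : G} (hh : confAct h θ = θ) :
    Φ (0, s * h) = transL h⁻¹ (Φ (0, s)) := by
  have h2 := hΦ.2 (0, s) 0 h hh
  simp only [wmul, confAct_zero, add_zero, confChi_zero_right, one_smul] at h2
  exact h2

lemma Tmap_indSpace_le
    (hreps : ∀ g : G, ∃! s, s ∈ Sθ ∧ confAct (s⁻¹ * g) θ = θ) :
    Submodule.map (TmapAux θ) (indSpace G θ V) ≤ inducedImage Sθ θ V := by
  rintro _ ⟨Φ, hΦ, rfl⟩
  rw [TmapAux_apply]
  apply Submodule.smul_mem
  apply Submodule.sum_mem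
  intro g _
  obtain ⟨s, ⟨hsS, hsθ⟩, _⟩ := hreps g
  have hΦ0 : Φ (0, g) = transL (s⁻¹ * g)⁻¹ (Φ (0, s)) := by
    have := indSpace_zero_eq hΦ (s := s) hsθ
    rwa [mul_inv_cancel_left] at this
  rw [hΦ0, transL_transL]
  have hmul : g * (s⁻¹ * g)⁻¹ = s := by group
  rw [hmul, confAct_eq_of_rep hsθ]
  exact gen_mem hsS (hΦ.1 (0, s))

lemma Tmap_indSpace_ge
    (hV : ∀ h : G, confAct h θ = θ → ∀ f ∈ V, transL h f ∈ V) :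
    inducedImage Sθ θ V ≤ Submodule.map (TmapAux θ) (indSpace G θ V) := by
  apply iSup₂_le
  rintro s hs _ ⟨u, ⟨f, hf, rfl⟩, rfl⟩
  exact ⟨PhiOf θ s f, PhiOf_mem_indSpace hV s hf, TmapAux_PhiOf θ s f⟩

lemma Tmap_inj {Φ : (Z → ZMod 2) × G → (X → ℂ)} (hΦ : Φ ∈ indSpace G θ V)
    (h0 : TmapAux θ Φ = 0) : Φ = 0 := by
  classical
  rw [TmapAux_apply] at h0
  rw [smul_eq_zero] at h0
  rcases h0 with hc | h0
  · exact absurd (inv_eq_zero.mp hc) (stab_card_ne_zero θ)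
  have hpt : ∀ (σ : Z → ZMod 2) (x : X),
      ∑ g : G, confChi (confAct g θ) σ * Φ (0, g) (g⁻¹ • x) = 0 := by
    intro σ x
    have := congrFun h0 (σ, x)
    rw [Finset.sum_apply] at this
    simpa using this
  have hzero : ∀ (g₀ : G) (x : X), Φ (0, g₀) (g₀⁻¹ • x) = 0 := by
    intro g₀ x
    have hdouble : ∑ σ : Z → ZMod 2, confChi (confAct g₀ θ) σ *
        ∑ g : G, confChi (confAct g θ) σ * Φ (0, g) (g⁻¹ • x) = 0 := by
      rw [Finset.sum_congr rfl fun σ _ => by rw [hpt σ x, mul_zero]]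
      simp
    rw [Finset.sum_congr rfl fun σ _ => Finset.mul_sum _ _ _, Finset.sum_comm] at hdouble
    have hinner : ∀ g : G,
        ∑ σ : Z → ZMod 2, confChi (confAct g₀ θ) σ * (confChi (confAct g θ) σ * Φ (0, g) (g⁻¹ • x))
        = (if confAct g₀ θ = confAct g θ then (Fintype.card (Z → ZMod 2) : ℂ) else 0)
            * Φ (0, g) (g⁻¹ • x) := by
      intro g
      rw [Finset.sum_congr rfl fun σ _ => (mul_assoc _ _ _).symm, ← Finset.sum_mul,
        confChi_orthogonal]
    rw [Finset.sum_congr rfl fun g _ => hinner g] at hdouble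
    have hcoset : ∀ g : G, confAct g₀ θ = confAct g θ →
        Φ (0, g) (g⁻¹ • x) = Φ (0, g₀) (g₀⁻¹ • x) := by
      intro g hg
      have hh : confAct (g₀⁻¹ * g) θ = θ := by
        rw [confAct_mul, ← hg]
        exact confAct_inv_confAct g₀ θ
      have he : Φ (0, g) = transL (g₀⁻¹ * g)⁻¹ (Φ (0, g₀)) := by
        have := indSpace_zero_eq hΦ (s := g₀) hh
        rwa [mul_inv_cancel_left] at this
      rw [he, transL_apply, inv_inv, smul_smul]
      have hmm : g₀⁻¹ * g * g⁻¹ = g₀⁻¹ := by group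
      rw [hmm]
    have hsimp : ∀ g : G,
        (if confAct g₀ θ = confAct g θ then (Fintype.card (Z → ZMod 2) : ℂ) else 0)
            * Φ (0, g) (g⁻¹ • x)
        = if confAct g₀ θ = confAct g θ
            then (Fintype.card (Z → ZMod 2) : ℂ) * Φ (0, g₀) (g₀⁻¹ • x) else 0 := by
      intro g
      split_ifs with h
      · rw [hcoset g h]
      · rw [zero_mul]
    rw [Finset.sum_congr rfl fun g _ => hsimp g, ← Finset.sum_filter,
      Finset.sum_const] at hdouble
    have hcard : (Finset.univ.filter fun g : G => confAct g₀ θ = confAct g θ).card ≠ 0 := by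
      apply Finset.card_ne_zero_of_mem (a := g₀)
      simp
    have := hdouble
    rw [nsmul_eq_mul] at this
    rcases mul_eq_zero.mp this with h | h
    · exact absurd (Nat.cast_eq_zero.mp h) hcard
    rcases mul_eq_zero.mp h with h2 | h2
    · exact absurd h2 (piCard_ne_zero (Z := Z))
    exact h2
  have hzero' : ∀ g : G, Φ (0, g) = 0 := by
    intro g
    funext y
    have := hzero g (g • y)
    rwa [inv_smul_smul] at this
  funext a
  have h2 := hΦ.2 (0, a.2) (confAct a.2⁻¹ a.1) 1 (confAct_one θ)
  have hwm : wmul ((0 : Z → ZMod 2), a.2) (confAct a.2⁻¹ a.1, 1) = a := by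
    unfold wmul
    simp
  rw [hwm] at h2
  rw [h2, hzero', map_zero, smul_zero]
  rfl

end Aux7
section Aux8
set_option linter.unusedSectionVars false

variable {G : Type*} [Group G] [Fintype G]
variable {Z : Type*} [Fintype Z] [DecidableEq Z] [MulAction G Z]
variable {X : Type*} [MulAction G X]
variable {θ : Z → ZMod 2} {V : Submodule ℂ (X → ℂ)}

lemma Tmap_intertwine (ω : Z → ZMod 2) (g : G)
    {Φ : (Z → ZMod 2) × G → (X → ℂ)} (hΦ : Φ ∈ indSpace G θ V) :
    TmapAux θ (indAct ω g Φ) = wreathAct ω g (TmapAux θ Φ) := by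
  rw [TmapAux_apply, TmapAux_apply]
  -- compute the LHS summands
  have hL : ∀ k : G, tChi (confAct k θ) (transL k ((indAct ω g Φ) (0, k)))
      = confChi (confAct k θ) ω • tChi (confAct k θ) (transL k (Φ (0, g⁻¹ * k))) := by
    intro k
    have h1 : (indAct ω g Φ) (0, k) = Φ (confAct g⁻¹ ω, g⁻¹ * k) := by
      unfold indAct winv wmul
      simp
    have h2 : ((confAct g⁻¹ ω, g⁻¹ * k) : (Z → ZMod 2) × G)
        = wmul (0, g⁻¹ * k) (confAct k⁻¹ ω, 1) := by
      unfold wmul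
      rw [← confAct_mul]
      have : g⁻¹ * k * k⁻¹ = g⁻¹ := by group
      rw [this]
      simp
    have h3 : (indAct ω g Φ) (0, k) = confChi (confAct k θ) ω • Φ (0, g⁻¹ * k) := by
      rw [h1, h2, hΦ.2 (0, g⁻¹ * k) (confAct k⁻¹ ω) 1 (confAct_one θ), inv_one,
        transL_one, confChi_confAct_left]
    rw [h3, map_smul, map_smul]
  rw [Finset.sum_congr rfl fun k _ => hL k]
  -- compute the RHS
  have hR : wreathAct ω g (((Finset.univ.filter fun h : G => confAct h θ = θ).card : ℂ)⁻¹ •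
      ∑ j : G, tChi (confAct j θ) (transL j (Φ (0, j))))
      = ((Finset.univ.filter fun h : G => confAct h θ = θ).card : ℂ)⁻¹ •
        ∑ j : G, confChi (confAct (g * j) θ) ω •
          tChi (confAct (g * j) θ) (transL (g * j) (Φ (0, j))) := by
    rw [show wreathAct ω g (((Finset.univ.filter fun h : G => confAct h θ = θ).card : ℂ)⁻¹ •
        ∑ j : G, tChi (confAct j θ) (transL j (Φ (0, j))))
      = wreathActL ω g (((Finset.univ.filter fun h : G => confAct h θ = θ).card : ℂ)⁻¹ •
        ∑ j : G, tChi (confAct j θ) (transL j (Φ (0, j)))) from rfl]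
    rw [map_smul, map_sum]
    congr 1
    refine Finset.sum_congr rfl fun j _ => ?_
    rw [wreathActL_apply, wreathAct_tChi, transL_transL, ← confAct_mul]
  rw [hR]
  congr 1
  refine Fintype.sum_equiv (Equiv.mulLeft g⁻¹) _ _ fun j => ?_
  rw [show ((Equiv.mulLeft g⁻¹) j) = g⁻¹ * j from rfl]
  have h1 : g * (g⁻¹ * j) = j := by group
  rw [h1]

end Aux8
section Aux9
set_option linter.unusedSectionVars false

variable {G : Type*} [Group G] [Fintype G]
variable {Z : Type*} [Fintype Z] [DecidableEq Z] [MulAction G Z]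
variable {X : Type*} [MulAction G X]
variable {θ : Z → ZMod 2} {Sθ : Set G} {V : Submodule ℂ (X → ℂ)}

lemma W_ne_bot (hone : (1 : G) ∈ Sθ) (hVne : V ≠ ⊥) : inducedImage Sθ θ V ≠ ⊥ := by
  obtain ⟨f, hfV, hfne⟩ := Submodule.exists_mem_ne_zero_of_ne_bot hVne
  rw [Submodule.ne_bot_iff]
  refine ⟨tChi θ f, ?_, ?_⟩
  · have := gen_mem (V := V) (θ := θ) hone hfV
    rwa [confAct_one, transL_one] at this
  · intro h
    apply hfne
    funext x
    have := congrFun h (0, x)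
    simpa using this

lemma EmapAux_mem {U' : Submodule ℂ ((Z → ZMod 2) × X → ℂ)}
    (hUinv : ∀ (ω : Z → ZMod 2) (g : G), ∀ F ∈ U', wreathAct ω g F ∈ U') (τ : Z → ZMod 2)
    {F : (Z → ZMod 2) × X → ℂ} (hF : F ∈ U') : EmapAux (X := X) G τ F ∈ U' := by
  rw [EmapAux_apply]
  apply Submodule.smul_mem
  apply Submodule.sum_mem
  intro ρ _
  exact Submodule.smul_mem _ _ (hUinv ρ 1 F hF)

lemma W_irreducible
    (hone : (1 : G) ∈ Sθ)
    (hreps : ∀ g : G, ∃! s, s ∈ Sθ ∧ confAct (s⁻¹ * g) θ = θ)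
    (hV : ∀ h : G, confAct h θ = θ → ∀ f ∈ V, transL h f ∈ V)
    (hVirr : ∀ U : Submodule ℂ (X → ℂ), U ≤ V →
      (∀ h : G, confAct h θ = θ → ∀ f ∈ U, transL h f ∈ U) → U = ⊥ ∨ U = V) :
    ∀ U : Submodule ℂ ((Z → ZMod 2) × X → ℂ), U ≤ inducedImage Sθ θ V →
      (∀ (ω : Z → ZMod 2) (g : G), ∀ F ∈ U, wreathAct ω g F ∈ U) →
      U = ⊥ ∨ U = inducedImage Sθ θ V := by
  intro U hUle hUinv
  by_cases hUbot : U = ⊥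
  · exact Or.inl hUbot
  right
  obtain ⟨F, hFU, hFne⟩ := Submodule.exists_mem_ne_zero_of_ne_bot hUbot
  -- find a nonzero isotypic component
  have hex : ∃ τ : Z → ZMod 2, EmapAux (X := X) G τ F ≠ 0 := by
    by_contra hno
    push_neg at hno
    apply hFne
    rw [← sum_EmapAux (G := G) F]
    exact Finset.sum_eq_zero fun τ _ => hno τ
  obtain ⟨τ, hτ⟩ := hex
  -- τ must be of the form sθ for s ∈ Sθ
  have hSex : ∃ s ∈ Sθ, confAct s θ = τ := by
    by_contra hnone
    push_neg at hnone
    apply hτ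
    have hle : Submodule.map (EmapAux (X := X) G τ) (inducedImage Sθ θ V) ≤ ⊥ := by
      apply map_inducedImage_le
      intro s hs f hf
      rw [EmapAux_tChi, if_neg (hnone s hs)]
      exact Submodule.zero_mem ⊥
    simpa using hle ⟨F, hUle hFU, rfl⟩
  obtain ⟨s, hs, hsτ⟩ := hSex
  -- the component lies in W_s
  have hcomp : EmapAux (X := X) G τ F ∈ (V.map (transL s)).map (tChi (confAct s θ)) := by
    have hle : Submodule.map (EmapAux (X := X) G τ) (inducedImage Sθ θ V)
        ≤ (V.map (transL s)).map (tChi (confAct s θ)) := by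
      apply map_inducedImage_le
      intro s' hs' f hf
      rw [EmapAux_tChi]
      split_ifs with h
      · have : s' = s := reps_inj hreps hs' hs (h.trans hsτ.symm)
        subst this
        exact ⟨transL s' f, ⟨f, hf, rfl⟩, rfl⟩
      · exact Submodule.zero_mem _
    exact hle ⟨F, hUle hFU, rfl⟩
  obtain ⟨u, ⟨f, hfV, rfl⟩, hEq⟩ := hcomp
  have hfne : f ≠ 0 := by
    intro h
    apply hτ
    rw [← hEq, h, map_zero, map_zero]
  -- tChi θ f ∈ U
  have hEU : EmapAux (X := X) G τ F ∈ U := EmapAux_mem hUinv τ hFU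
  rw [← hEq] at hEU
  have hUchi : tChi θ f ∈ U := by
    have h2 := hUinv 0 s⁻¹ _ hEU
    rw [wreathAct_tChi, confAct_inv_confAct, confChi_zero_right, one_smul,
      transL_transL, inv_mul_cancel, transL_one] at h2
    exact h2
  -- the subspace of V mapping into U
  set U₁ : Submodule ℂ (X → ℂ) := V ⊓ Submodule.comap (tChi θ) U with hU₁def
  have hU₁inv : ∀ h : G, confAct h θ = θ → ∀ f' ∈ U₁, transL h f' ∈ U₁ := by
    rintro h hh f' ⟨hf'V, hf'U⟩
    refine ⟨hV h hh f' hf'V, ?_⟩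
    show tChi θ (transL h f') ∈ U
    have h3 := hUinv 0 h _ hf'U
    rw [wreathAct_tChi, hh, confChi_zero_right, one_smul] at h3
    exact h3
  have hU₁V : U₁ = V := by
    rcases hVirr U₁ inf_le_left hU₁inv with hbot | hV'
    · exfalso
      have : f ∈ U₁ := ⟨hfV, hUchi⟩
      rw [hbot, Submodule.mem_bot] at this
      exact hfne this
    · exact hV'
  -- conclude W ≤ U
  have hWle : inducedImage Sθ θ V ≤ U := by
    apply iSup₂_le
    rintro s' hs' _ ⟨u, ⟨f', hf', rfl⟩, rfl⟩
    have h1 : tChi θ f' ∈ U := by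
      have : f' ∈ U₁ := hU₁V ▸ hf'
      exact this.2
    have h2 := hUinv 0 s' _ h1
    rwa [wreathAct_tChi, confChi_zero_right, one_smul] at h2
  exact le_antisymm hUle hWle

end Aux9
/-- Let `S_θ` be a set of representatives of the left cosets of
`G_θ` in `G` with `1 ∈ S_θ`, and let `V ⊆ L(X)` be a `G_θ`-invariant irreducible
subspace. Then `W = ⊕_{s∈S_θ} {χ_{sθ} ⊗ f : f ∈ sV}` is `C₂≀G`-invariant, the
representation of `C₂≀G` on `W` is equivalent to
`Ind_{C₂≀G_θ}^{C₂≀G}(χ̃_θ ⊗ η^#)`, and in particular `W` is irreducible. -/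
theorem induced_subspace_invariant_equivalent_irreducible
    {G : Type*} [Group G] [Fintype G]
    {Z : Type*} [Fintype Z] [DecidableEq Z] [MulAction G Z]
    {X : Type*} [Fintype X] [MulAction G X] [MulAction.IsPretransitive G X]
    (θ : Z → ZMod 2) (Sθ : Set G) (hone : (1 : G) ∈ Sθ)
    (hreps : ∀ g : G, ∃! s, s ∈ Sθ ∧ confAct (s⁻¹ * g) θ = θ)
    (V : Submodule ℂ (X → ℂ))
    (hV : ∀ h : G, confAct h θ = θ → ∀ f ∈ V, transL h f ∈ V)
    (hVne : V ≠ ⊥)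
    (hVirr : ∀ U : Submodule ℂ (X → ℂ), U ≤ V →
      (∀ h : G, confAct h θ = θ → ∀ f ∈ U, transL h f ∈ U) → U = ⊥ ∨ U = V) :
    (∀ (ω : Z → ZMod 2) (g : G), ∀ F ∈ inducedImage Sθ θ V,
        wreathAct ω g F ∈ inducedImage Sθ θ V)
    ∧ (∃ T : ((Z → ZMod 2) × G → (X → ℂ)) →ₗ[ℂ] ((Z → ZMod 2) × X → ℂ),
        Submodule.map T (indSpace G θ V) = inducedImage Sθ θ V
        ∧ (∀ Φ ∈ indSpace G θ V, ∀ Ψ ∈ indSpace G θ V, T Φ = T Ψ → Φ = Ψ)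
        ∧ (∀ (ω : Z → ZMod 2) (g : G), ∀ Φ ∈ indSpace G θ V,
            T (indAct ω g Φ) = wreathAct ω g (T Φ)))
    ∧ (inducedImage Sθ θ V ≠ ⊥
        ∧ ∀ U : Submodule ℂ ((Z → ZMod 2) × X → ℂ), U ≤ inducedImage Sθ θ V →
            (∀ (ω : Z → ZMod 2) (g : G), ∀ F ∈ U, wreathAct ω g F ∈ U) →
            U = ⊥ ∨ U = inducedImage Sθ θ V) := by
  refine ⟨W_invariant hreps hV, ⟨TmapAux θ, ?_, ?_, ?_⟩,
    W_ne_bot hone hVne, W_irreducible hone hreps hV hVirr⟩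
  · exact le_antisymm (Tmap_indSpace_le hreps) (Tmap_indSpace_ge hV)
  · intro Φ hΦ Ψ hΨ hTeq
    have hsub : Φ - Ψ ∈ indSpace G θ V := Submodule.sub_mem _ hΦ hΨ
    have h0 : TmapAux θ (Φ - Ψ) = 0 := by rw [map_sub, hTeq, sub_self]
    exact sub_eq_zero.mp (Tmap_inj hsub h0)
  · intro ω g Φ hΦ
    exact Tmap_intertwine ω g hΦ
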